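/- arXiv:1210.5824 — 2 statements merged into one kernel-verified Lean document; each statement's English description precedes it below -/
import Mathlib

section
/- Let Λ be a skew-symmetric n×n integer matrix of rank n, and consider the log-canonical Poisson bracket on R = ℂ[x_1,…,x_n] with {x_i,x_j} = λ_{ij}x_ix_j. If I ⊆ R is a nonzero Poisson ideal (i.e. {R, I} ⊆ I), then I contains a monomial x^v for some v ∈ ℤ_{≥0}ⁿ. -/
open MvPolynomial

/-- Auxiliary: full rank gives a row separating any two distinct integer-ish vectors. -/
lemma aux_fullrank_row (n : ℕ) (Λ : Matrix (Fin n) (Fin n) ℤ)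
    (hΛrank : (Λ.map (Int.cast : ℤ → ℚ)).rank = n)
    (v : Fin n → ℚ) (hv : v ≠ 0) :
    ∃ i, (∑ j, (Λ i j : ℚ) * v j) ≠ 0 := by
  set A := Λ.map (Int.cast : ℤ → ℚ) with hA
  have hrange : LinearMap.range A.mulVecLin = ⊤ := by
    apply Submodule.eq_top_of_finrank_eq
    rw [show Module.finrank ℚ (LinearMap.range A.mulVecLin) = A.rank from rfl, hΛrank,
      Module.finrank_fintype_fun_eq_card, Fintype.card_fin]
  have hsurj : Function.Surjective A.mulVecLin := LinearMap.range_eq_top.mp hrange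
  have hinj : Function.Injective A.mulVecLin := LinearMap.injective_iff_surjective.mpr hsurj
  have hAv : A.mulVec v ≠ 0 := by
    intro h
    apply hv
    have : A.mulVecLin v = A.mulVecLin 0 := by
      simpa [Matrix.mulVecLin_apply, h] using h
    exact hinj this
  obtain ⟨i, hi⟩ := Function.ne_iff.mp hAv
  refine ⟨i, ?_⟩
  simpa [Matrix.mulVec, dotProduct, hA, Matrix.map_apply] using hi

/-- If Λ is skew-symmetric of full rank n and R = ℂ[x₁,…,xₙ] carries the
log-canonical Poisson bracket with {xᵢ,xⱼ} = λᵢⱼxᵢxⱼ, then every nonzero Poisson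
ideal of R contains a monomial. -/
theorem poisson_ideal_contains_monomial (n : ℕ) (Λ : Matrix (Fin n) (Fin n) ℤ)
    (hΛskew : Λ.transpose = -Λ)
    (hΛrank : (Λ.map (Int.cast : ℤ → ℚ)).rank = n)
    (br : MvPolynomial (Fin n) ℂ → MvPolynomial (Fin n) ℂ → MvPolynomial (Fin n) ℂ)
    (hadd_left : ∀ a b c, br (a + b) c = br a c + br b c)
    (hadd_right : ∀ a b c, br a (b + c) = br a b + br a c)
    (hsmul_left : ∀ (μ : ℂ) a b, br (μ • a) b = μ • br a b)
    (hsmul_right : ∀ (μ : ℂ) a b, br a (μ • b) = μ • br a b)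
    (hskew : ∀ a b, br a b = -br b a)
    (hjacobi : ∀ a b c, br a (br b c) + br c (br a b) + br b (br c a) = 0)
    (hleibniz : ∀ a b c, br a (b * c) = br a b * c + b * br a c)
    (hlog : ∀ i j : Fin n, br (X i) (X j) = (Λ i j : ℂ) • (X i * X j))
    (I : Ideal (MvPolynomial (Fin n) ℂ)) (hI : I ≠ ⊥)
    (hpoisson : ∀ a ∈ I, ∀ r, br r a ∈ I) :
    ∃ v : Fin n →₀ ℕ, monomial v (1 : ℂ) ∈ I := by
  classical
  -- basic bracket facts
  have hbr1 : ∀ a, br a (1 : MvPolynomial (Fin n) ℂ) = 0 := by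
    intro a
    have h := hleibniz a 1 1
    rw [mul_one, mul_one, one_mul] at h
    have h2 : br a 1 + 0 = br a 1 + br a 1 := by rw [add_zero]; exact h
    exact (add_left_cancel h2).symm
  -- the bracket with X i, computed via a derivation formula
  have hbrX : ∀ (i : Fin n) (f : MvPolynomial (Fin n) ℂ),
      br (X i) f = X i * ∑ j, (Λ i j : ℂ) • (X j * pderiv j f) := by
    intro i f
    induction f using MvPolynomial.induction_on with
    | C a =>
        have : (C a : MvPolynomial (Fin n) ℂ) = a • 1 := by
          rw [smul_eq_C_mul, mul_one]
        rw [this, hsmul_right, hbr1]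
        simp
    | add p q hp hq =>
        rw [hadd_right, hp, hq]
        simp only [map_add, mul_add, smul_add]
        rw [Finset.sum_add_distrib, mul_add]
    | mul_X p k hp =>
        rw [hleibniz, hp, hlog]
        have hder : ∀ j : Fin n, (Λ i j : ℂ) • (X j * pderiv j (p * X k))
            = ((Λ i j : ℂ) • (X j * pderiv j p)) * X k
              + (if k = j then (Λ i j : ℂ) • (X j * p) else 0) := by
          intro j
          rw [Derivation.leibniz, smul_eq_mul, smul_eq_mul]
          by_cases hjk : k = j
          · subst hjk
            rw [pderiv_X_self, if_pos rfl, mul_one, smul_mul_assoc]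
            rw [← smul_add]
            congr 1
            ring
          · rw [pderiv_X_of_ne hjk, if_neg hjk, add_zero, mul_zero, zero_add,
              smul_mul_assoc]
            congr 1
            ring
        have hsum : (∑ j, (Λ i j : ℂ) • (X j * pderiv j (p * X k)))
            = (∑ j, (Λ i j : ℂ) • (X j * pderiv j p)) * X k
              + (Λ i k : ℂ) • (X k * p) := by
          rw [Finset.sum_congr rfl (fun j _ => hder j), Finset.sum_add_distrib,
            Finset.sum_ite_eq (Finset.univ : Finset (Fin n)) k
              (fun j => (Λ i j : ℂ) • (X j * p)), Finset.sum_mul]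
          simp
        rw [hsum, mul_add]
        congr 1
        · rw [← mul_assoc]
        · rw [mul_smul_comm, mul_smul_comm]
          congr 1
          ring
  -- the derivation formula on monomials
  have hDmon : ∀ (i : Fin n) (v : Fin n →₀ ℕ) (c : ℂ),
      (∑ j, (Λ i j : ℂ) • (X j * pderiv j (monomial v c)))
        = (∑ j, (Λ i j : ℂ) * (v j : ℂ)) • monomial v c := by
    intro i v c
    rw [Finset.sum_smul]
    refine Finset.sum_congr rfl ?_
    intro j _
    rw [pderiv_monomial]
    by_cases hvj : v j = 0
    · simp [hvj]
    · have hvv : v - Finsupp.single j 1 + Finsupp.single j 1 = v := by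
        ext k
        simp only [Finsupp.add_apply, Finsupp.coe_tsub, Pi.sub_apply, Finsupp.single_apply]
        by_cases hk : j = k
        · subst hk; simp; omega
        · simp [hk]
      have : (X j : MvPolynomial (Fin n) ℂ) * monomial (v - Finsupp.single j 1) (c * (v j : ℂ))
          = monomial v (c * (v j : ℂ)) := by
        rw [mul_comm, ← pow_one (X j : MvPolynomial (Fin n) ℂ), ← monomial_add_single, hvv]
      rw [this, smul_monomial, smul_monomial]
      congr 1
      rw [smul_eq_mul, smul_eq_mul]
      ring
  have hbrmon : ∀ (i : Fin n) (v : Fin n →₀ ℕ) (c : ℂ),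
      br (X i) (monomial v c)
        = (∑ j, (Λ i j : ℂ) * (v j : ℂ)) • (X i * monomial v c) := by
    intro i v c
    rw [hbrX, hDmon, mul_smul_comm]
  -- separating row for two distinct exponent vectors, in ℂ
  have hsep : ∀ u w : Fin n →₀ ℕ, u ≠ w →
      ∃ i : Fin n, (∑ j, (Λ i j : ℂ) * (u j : ℂ)) ≠ ∑ j, (Λ i j : ℂ) * (w j : ℂ) := by
    intro u w huw
    have hv : (fun j => (u j : ℚ) - (w j : ℚ)) ≠ 0 := by
      intro h
      apply huw
      ext j
      have := congrFun h j
      simp only [Pi.zero_apply, sub_eq_zero] at this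
      exact_mod_cast this
    obtain ⟨i, hi⟩ := aux_fullrank_row n Λ hΛrank _ hv
    refine ⟨i, ?_⟩
    intro h
    apply hi
    have hq : (∑ j, (Λ i j : ℚ) * (u j : ℚ)) = ∑ j, (Λ i j : ℚ) * (w j : ℚ) := by
      have hcast : ((∑ j, (Λ i j : ℚ) * (u j : ℚ) : ℚ) : ℂ)
          = ((∑ j, (Λ i j : ℚ) * (w j : ℚ) : ℚ) : ℂ) := by
        push_cast
        exact h
      exact_mod_cast hcast
    rw [Finset.sum_congr rfl (fun j _ => by rw [mul_sub] : ∀ j ∈ Finset.univ,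
      (Λ i j : ℚ) * ((u j : ℚ) - (w j : ℚ)) = (Λ i j : ℚ) * (u j : ℚ) - (Λ i j : ℚ) * (w j : ℚ)),
      Finset.sum_sub_distrib, hq, sub_self]
  -- main induction on the number of monomials
  have key : ∀ k : ℕ, ∀ f : MvPolynomial (Fin n) ℂ, f ∈ I → f ≠ 0 → f.support.card ≤ k →
      ∃ v : Fin n →₀ ℕ, monomial v (1 : ℂ) ∈ I := by
    intro k
    induction k with
    | zero =>
        intro f _ hf0 hc
        exfalso
        apply hf0
        have : f.support = ∅ := Finset.card_eq_zero.mp (Nat.le_zero.mp hc)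
        exact MvPolynomial.support_eq_empty.mp this
    | succ k ih =>
        intro f hfI hf0 hcard
        by_cases hle : f.support.card ≤ k
        · exact ih f hfI hf0 hle
        by_cases hone : f.support.card = 1
        · obtain ⟨v, hv⟩ := Finset.card_eq_one.mp hone
          have hvmem : v ∈ f.support := hv ▸ Finset.mem_singleton_self v
          have hc : coeff v f ≠ 0 := MvPolynomial.mem_support_iff.mp hvmem
          refine ⟨v, ?_⟩
          have hfe : f = monomial v (coeff v f) := by
            conv_lhs => rw [MvPolynomial.as_sum f]
            rw [hv, Finset.sum_singleton]
          have : monomial v (1 : ℂ) = C (coeff v f)⁻¹ * f := by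
            conv_rhs => rw [hfe]
            rw [C_mul_monomial, coeff_monomial, if_pos rfl, inv_mul_cancel₀ hc]
          rw [this]
          exact I.mul_mem_left _ hfI
        · have h2 : 1 < f.support.card := by omega
          obtain ⟨u, hu, w, hw, huw⟩ := Finset.one_lt_card.mp h2
          obtain ⟨i, hi⟩ := hsep u w huw
          set cw : ℂ := ∑ j, (Λ i j : ℂ) * (w j : ℂ) with hcw
          set g : MvPolynomial (Fin n) ℂ := br (X i) f - cw • (X i * f) with hgdef
          have hgI : g ∈ I := by
            refine Submodule.sub_mem _ (hpoisson f hfI (X i)) ?_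
            rw [smul_eq_C_mul]
            exact I.mul_mem_left _ (I.mul_mem_left _ hfI)
          -- bracket as a sum over the support
          have hbrsum : br (X i) f = ∑ v ∈ f.support,
              (∑ j, (Λ i j : ℂ) * (v j : ℂ)) • (X i * monomial v (coeff v f)) := by
            let φ : MvPolynomial (Fin n) ℂ →+ MvPolynomial (Fin n) ℂ :=
              AddMonoidHom.mk' (br (X i)) (fun a b => hadd_right (X i) a b)
            have : br (X i) f = φ f := rfl
            rw [this]
            conv_lhs => rw [MvPolynomial.as_sum f]
            rw [map_sum]
            exact Finset.sum_congr rfl fun v _ => hbrmon i v (coeff v f)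
          have hXf : X i * f = ∑ v ∈ f.support, X i * monomial v (coeff v f) := by
            conv_lhs => rw [MvPolynomial.as_sum f]
            rw [Finset.mul_sum]
          have hg : g = ∑ v ∈ f.support,
              ((∑ j, (Λ i j : ℂ) * (v j : ℂ)) - cw) • (X i * monomial v (coeff v f)) := by
            rw [hgdef, hbrsum, hXf, Finset.smul_sum, ← Finset.sum_sub_distrib]
            exact Finset.sum_congr rfl fun v _ => by rw [sub_smul]
          -- rewrite each term as a monomial
          have hterm : ∀ v : Fin n →₀ ℕ,
              (X i : MvPolynomial (Fin n) ℂ) * monomial v (coeff v f)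
                = monomial (v + Finsupp.single i 1) (coeff v f) := by
            intro v
            rw [monomial_add_single, pow_one, mul_comm]
          have hg' : g = ∑ v ∈ f.support.erase w,
              ((∑ j, (Λ i j : ℂ) * (v j : ℂ)) - cw)
                • monomial (v + Finsupp.single i 1) (coeff v f) := by
            rw [hg]
            rw [← Finset.sum_erase f.support (f := fun v =>
              ((∑ j, (Λ i j : ℂ) * (v j : ℂ)) - cw) • (X i * monomial v (coeff v f)))
              (by show ((∑ j, (Λ i j : ℂ) * (w j : ℂ)) - cw) • (X i * monomial w (coeff w f)) = 0
                  rw [← hcw, sub_self, zero_smul])]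
            exact Finset.sum_congr rfl fun v _ => by rw [hterm v]
          -- g is nonzero: its coefficient at u + eᵢ is nonzero
          have hcoeff : coeff (u + Finsupp.single i 1) g
              = ((∑ j, (Λ i j : ℂ) * (u j : ℂ)) - cw) * coeff u f := by
            rw [hg', coeff_sum]
            rw [Finset.sum_eq_single u]
            · rw [coeff_smul, coeff_monomial, if_pos rfl, smul_eq_mul]
            · intro v hv hvu
              rw [coeff_smul, coeff_monomial,
                if_neg (fun h => hvu (by
                  have := add_right_cancel h
                  exact this)), smul_zero]
            · intro hunot
              exfalso
              exact hunot (Finset.mem_erase.mpr ⟨huw, hu⟩)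
          have hg0 : g ≠ 0 := by
            intro h
            rw [h, coeff_zero] at hcoeff
            have hcu : coeff u f ≠ 0 := MvPolynomial.mem_support_iff.mp hu
            have := mul_eq_zero.mp hcoeff.symm
            rcases this with h1 | h1
            · exact hi (by rwa [sub_eq_zero] at h1)
            · exact hcu h1
          -- support of g is small
          have hsub : g.support ⊆ (f.support.erase w).image (· + Finsupp.single i 1) := by
            rw [hg']
            refine Finset.Subset.trans MvPolynomial.support_sum ?_
            intro t ht
            rw [Finset.mem_biUnion] at ht
            obtain ⟨v, hv, htv⟩ := ht
            have : t ∈ (monomial (v + Finsupp.single i 1) (coeff v f)).support :=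
              MvPolynomial.support_smul htv
            have hts : t = v + Finsupp.single i 1 := by
              have := Finset.mem_of_subset support_monomial_subset this
              exact Finset.mem_singleton.mp this
            rw [hts]
            exact Finset.mem_image_of_mem _ hv
          have hcg : g.support.card ≤ k := by
            calc g.support.card ≤ ((f.support.erase w).image (· + Finsupp.single i 1)).card :=
                  Finset.card_le_card hsub
              _ ≤ (f.support.erase w).card := Finset.card_image_le
              _ = f.support.card - 1 := Finset.card_erase_of_mem hw
              _ ≤ k := by omega
          exact ih g hgI hg0 hcg
  obtain ⟨f, hfI, hf0⟩ := Submodule.ne_bot_iff I |>.mp hI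
  exact key f.support.card f hfI hf0 le_rfl
end

section
/- Let n = 2k and let B be a skew-symmetric n×n integer matrix with b_{ij} > 0 for all i < j, invertible over ℚ with μB⁻¹ integral for some nonzero μ ∈ ℤ, satisfying condition (*): for each i, {y_i, x_i} = μ_1 m_i^+ + μ_2 m_i^- with μ_1 ≠ μ_2 under the log-canonical bracket given by Λ = μB⁻¹. Then the lower bound algebra generated by x_1,…,x_n, y_1,…,y_n, where x_i y_i = m_i^+ + m_i^-, contains no nonzero proper Poisson prime ideal. -/
open MvPolynomial

noncomputable def Dop {n : ℕ} (L : Matrix (Fin n) (Fin n) ℤ) (j : Fin n)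
    (f : MvPolynomial (Fin n) ℂ) : MvPolynomial (Fin n) ℂ :=
  ∑ i : Fin n, (L j i : ℂ) • (X i * pderiv i f)

noncomputable def wfun {n : ℕ} (L : Matrix (Fin n) (Fin n) ℤ) (j : Fin n)
    (m : Fin n →₀ ℕ) : ℂ := ∑ i : Fin n, (L j i : ℂ) * (m i : ℂ)

lemma X_mul_pderiv_monomial {n : ℕ} (i : Fin n) (m : Fin n →₀ ℕ) (c : ℂ) :
    X i * pderiv i (monomial m c) = (m i : ℂ) • monomial m c := by
  rcases Nat.eq_zero_or_pos (m i) with h | h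
  · simp [pderiv_monomial, h]
  · have hle : Finsupp.single i 1 ≤ m := by rwa [Finsupp.single_le_iff]
    rw [pderiv_monomial, ← pow_one (X i : MvPolynomial (Fin n) ℂ), X_pow_eq_monomial,
      monomial_mul, one_mul, add_comm, tsub_add_cancel_of_le hle, smul_monomial,
      smul_eq_mul, mul_comm]

lemma Dop_monomial {n : ℕ} (L : Matrix (Fin n) (Fin n) ℤ) (j : Fin n)
    (m : Fin n →₀ ℕ) (c : ℂ) :
    Dop L j (monomial m c) = wfun L j m • monomial m c := by
  unfold Dop wfun
  rw [Finset.sum_smul]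
  exact Finset.sum_congr rfl fun i _ => by rw [X_mul_pderiv_monomial, smul_smul]

lemma Dop_add {n : ℕ} (L : Matrix (Fin n) (Fin n) ℤ) (j : Fin n)
    (f g : MvPolynomial (Fin n) ℂ) :
    Dop L j (f + g) = Dop L j f + Dop L j g := by
  unfold Dop
  rw [← Finset.sum_add_distrib]
  exact Finset.sum_congr rfl fun i _ => by rw [map_add, mul_add, smul_add]

lemma coeff_Dop {n : ℕ} (L : Matrix (Fin n) (Fin n) ℤ) (j : Fin n)
    (f : MvPolynomial (Fin n) ℂ) (m : Fin n →₀ ℕ) :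
    coeff m (Dop L j f) = wfun L j m * coeff m f := by
  induction f using MvPolynomial.induction_on' with
  | monomial m' c =>
    rw [Dop_monomial, coeff_smul, smul_eq_mul, coeff_monomial]
    split_ifs with h
    · subst h; rfl
    · simp
  | add f g hf hg => rw [Dop_add, coeff_add, coeff_add, hf, hg, mul_add]

lemma Dop_mul {n : ℕ} (L : Matrix (Fin n) (Fin n) ℤ) (j : Fin n)
    (f g : MvPolynomial (Fin n) ℂ) :
    Dop L j (f * g) = Dop L j f * g + f * Dop L j g := by
  unfold Dop
  rw [Finset.sum_mul, Finset.mul_sum, ← Finset.sum_add_distrib]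
  refine Finset.sum_congr rfl fun i _ => ?_
  rw [pderiv_mul, mul_add, smul_add, smul_mul_assoc]
  congr 1
  · congr 1; rw [mul_assoc]
  · rw [mul_smul_comm]; congr 1; ring

lemma Dop_C {n : ℕ} (L : Matrix (Fin n) (Fin n) ℤ) (j : Fin n) (c : ℂ) :
    Dop L j (C c) = 0 := by
  simp [Dop, pderiv_C]

lemma wfun_single {n : ℕ} (L : Matrix (Fin n) (Fin n) ℤ) (j i : Fin n) :
    wfun L j (Finsupp.single i 1) = (L j i : ℂ) := by
  unfold wfun
  rw [Finset.sum_eq_single i]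
  · simp
  · intro b _ hb; simp [Finsupp.single_apply, (Ne.symm hb)]
  · simp

lemma Dop_X {n : ℕ} (L : Matrix (Fin n) (Fin n) ℤ) (j i : Fin n) :
    Dop L j (X i) = (L j i : ℂ) • X i := by
  have : (X i : MvPolynomial (Fin n) ℂ) = monomial (Finsupp.single i 1) 1 := by
    rw [← X_pow_eq_monomial, pow_one]
  rw [this, Dop_monomial, wfun_single]

lemma prod_X_pow_eq {n : ℕ} (d : Fin n → ℕ) :
    (∏ j : Fin n, (X j : MvPolynomial (Fin n) ℂ) ^ d j)
      = monomial (Finsupp.equivFunOnFinite.symm d) 1 := by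
  set m : Fin n →₀ ℕ := Finsupp.equivFunOnFinite.symm d with hmdef
  have hm : ∀ j, m j = d j := fun j => rfl
  rw [← prod_X_pow_eq_monomial]
  symm
  apply Finset.prod_subset (Finset.subset_univ _)
  intro j _ hj
  have h0 : m j = 0 := Finsupp.notMem_support_iff.mp hj
  rw [h0, pow_zero]

lemma wfun_equivFun {n : ℕ} (L : Matrix (Fin n) (Fin n) ℤ) (j : Fin n) (d : Fin n → ℕ) :
    wfun L j (Finsupp.equivFunOnFinite.symm d) = ∑ i : Fin n, (L j i : ℂ) * (d i : ℂ) := rfl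

/-- For an acyclic seed of even rank n = 2k with B skew-symmetric,
bᵢⱼ > 0 for i < j, invertible with μB⁻¹ = L integral, satisfying the genericity
condition (*), the lower bound algebra generated by x₁,…,xₙ,y₁,…,yₙ (with
xᵢyᵢ = mᵢ⁺ + mᵢ⁻), endowed with the log-canonical Poisson bracket given by L,
contains no nonzero (proper) Poisson prime ideal. -/
theorem acyclic_no_poisson_primes (k n : ℕ) (hn : n = 2 * k)
    (B L : Matrix (Fin n) (Fin n) ℤ) (μ : ℤ) (hμ : μ ≠ 0)
    (hskewB : B.transpose = -B)
    (hposB : ∀ i j : Fin n, i < j → 0 < B i j)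
    (hBL : B * L = μ • (1 : Matrix (Fin n) (Fin n) ℤ))
    (hLB : L * B = μ • (1 : Matrix (Fin n) (Fin n) ℤ))
    (hgen : ∀ i : Fin n,
      ∑ j : Fin n, (L i j : ℚ) * (max (B i j) 0 + min (B i j) 0) ≠ 0)
    (F : Type*) [Field F] [Algebra (MvPolynomial (Fin n) ℂ) F]
    [IsFractionRing (MvPolynomial (Fin n) ℂ) F] [Algebra ℂ F]
    [IsScalarTower ℂ (MvPolynomial (Fin n) ℂ) F]
    (x y : Fin n → F)
    (hx : ∀ i, x i = algebraMap (MvPolynomial (Fin n) ℂ) F (X i))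
    (hy : ∀ i, y i = (x i)⁻¹ *
      (algebraMap (MvPolynomial (Fin n) ℂ) F ((∏ j : Fin n, X j ^ (B i j).toNat)
        + ∏ j : Fin n, X j ^ (-B i j).toNat)))
    (A : Subalgebra ℂ F)
    (hA : A = Algebra.adjoin ℂ (Set.range x ∪ Set.range y))
    (br : F → F → F)
    (hadd_left : ∀ a b c, br (a + b) c = br a c + br b c)
    (hadd_right : ∀ a b c, br a (b + c) = br a b + br a c)
    (hsmul_left : ∀ (c : ℂ) a b, br (c • a) b = c • br a b)
    (hsmul_right : ∀ (c : ℂ) a b, br a (c • b) = c • br a b)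
    (hskew : ∀ a b, br a b = -br b a)
    (hjacobi : ∀ a b c, br a (br b c) + br c (br a b) + br b (br c a) = 0)
    (hleibniz : ∀ a b c, br a (b * c) = br a b * c + b * br a c)
    (hlog : ∀ i j : Fin n, br (x i) (x j) = (L i j : ℂ) • (x i * x j))
    (hclosed : ∀ a b : F, a ∈ A → b ∈ A → br a b ∈ A)
    (P : Ideal A) (hprime : P.IsPrime)
    (hpoisson : ∀ a : A, a ∈ P → ∀ r b : A, (b : F) = br (r : F) (a : F) → b ∈ P) :
    P = ⊥ := by
  classical
  set R := MvPolynomial (Fin n) ℂ with hR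
  let φa : R →ₐ[ℂ] F := IsScalarTower.toAlgHom ℂ R F
  have hφa : ∀ f : R, φa f = algebraMap R F f := fun f => rfl
  have hφinj : Function.Injective φa := IsFractionRing.injective R F
  haveI : CharZero F := charZero_of_injective_algebraMap (algebraMap ℂ F).injective
  -- the algebra map lands in A
  have hφA : ∀ f : R, φa f ∈ A := by
    intro f
    have h1 : φa f ∈ (⊤ : Subalgebra ℂ R).map φa := ⟨f, trivial, rfl⟩
    rw [← MvPolynomial.adjoin_range_X, AlgHom.map_adjoin] at h1
    refine SetLike.le_def.mp ?_ h1
    rw [hA]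
    apply Algebra.adjoin_mono
    rintro _ ⟨_, ⟨i, rfl⟩, rfl⟩
    exact Or.inl ⟨i, by rw [hx]; rfl⟩
  let ψ : R →ₐ[ℂ] A := φa.codRestrict A hφA
  have hψ : ∀ f : R, (ψ f : F) = algebraMap R F f := fun f => rfl
  let Q : Ideal R := P.comap ψ
  haveI hQprime : Q.IsPrime := Ideal.IsPrime.comap ψ.toRingHom
  have hQmem : ∀ f : R, f ∈ Q ↔ ψ f ∈ P := fun f => Iff.rfl
  have hxne : ∀ i, x i ≠ 0 := by
    intro i
    rw [hx i]
    exact fun h => MvPolynomial.X_ne_zero i (hφinj (by rw [hφa, h, map_zero]))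
  -- bracket basics
  have hbr_one : ∀ a, br a 1 = 0 := by
    intro a
    have h := hleibniz a 1 1
    rw [mul_one, mul_one, one_mul] at h
    nth_rewrite 1 [← add_zero (br a 1)] at h
    exact (add_left_cancel h).symm
  have hbr_self : ∀ a, br a a = 0 := by
    intro a
    have h := hskew a a
    have h2 : br a a + br a a = 0 := by nth_rewrite 1 [h]; ring
    have h3 : (2 : F) * br a a = 0 := by rw [two_mul]; exact h2
    rcases mul_eq_zero.mp h3 with h4 | h4
    · exact absurd h4 two_ne_zero
    · exact h4
  -- the key derivative identity
  have hkey : ∀ (j : Fin n) (f : R),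
      br (x j) (algebraMap R F f) = x j * algebraMap R F (Dop L j f) := by
    intro j f
    induction f using MvPolynomial.induction_on with
    | C c =>
      have hc : (algebraMap R F) (C c) = algebraMap ℂ F c := by
        rw [← MvPolynomial.algebraMap_eq, ← IsScalarTower.algebraMap_apply]
      rw [hc, Dop_C, map_zero, mul_zero, Algebra.algebraMap_eq_smul_one, hsmul_right,
        hbr_one, smul_zero]
    | add p q hp hq =>
      rw [map_add, hadd_right, hp, hq, Dop_add, map_add, mul_add]
    | mul_X p i hp =>
      have hsm : (algebraMap R F) ((L j i : ℂ) • (X i : R))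
          = (L j i : ℂ) • (algebraMap R F (X i)) := by
        rw [MvPolynomial.smul_eq_C_mul, map_mul, ← MvPolynomial.algebraMap_eq,
          ← IsScalarTower.algebraMap_apply, Algebra.smul_def]
      rw [map_mul, ← hx i, hleibniz, hp, hlog, Dop_mul, Dop_X, map_add, map_mul,
        map_mul, hsm, ← hx i, mul_add]
      simp only [Algebra.smul_def]
      ring
  -- Poisson closure of Q under the operators
  have hQD : ∀ f ∈ Q, ∀ j : Fin n, X j * Dop L j f ∈ Q := by
    intro f hf j
    rw [hQmem]
    refine hpoisson (ψ f) hf (ψ (X j)) (ψ (X j * Dop L j f)) ?_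
    rw [hψ, hψ, hψ, map_mul, ← hx j, hkey]
  -- scalar multiples stay in Q
  have hQsmul : ∀ (c : ℂ) (g : R), g ∈ Q → c • g ∈ Q := by
    intro c g hg
    rw [MvPolynomial.smul_eq_C_mul]
    exact Q.mul_mem_left _ hg
  have hQne : (1 : R) ∉ Q := fun h => hQprime.ne_top (Q.eq_top_iff_one.mpr h)
  have hBdiag : ∀ i, B i i = 0 := by
    intro i
    have h := congrFun (congrFun hskewB i) i
    simp only [Matrix.transpose_apply, Matrix.neg_apply] at h
    omega
  have hBneg : ∀ i j : Fin n, B i j < 0 → j < i := by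
    intro i j h
    rcases lt_trichotomy i j with hij | hij | hij
    · have := hposB i j hij; omega
    · subst hij; rw [hBdiag] at h; omega
    · exact hij
  -- Step 2 : no variable lies in P
  have hnoX : ∀ i : Fin n, ψ (X i) ∉ P := by
    by_contra hcon
    push_neg at hcon
    obtain ⟨i0, hi0⟩ := hcon
    set S : Finset (Fin n) := Finset.univ.filter (fun i => ψ (X i) ∈ P) with hS
    have hSne : S.Nonempty := ⟨i0, by simp [hS, hi0]⟩
    set i := S.min' hSne with hidef
    have hiP : ψ (X i) ∈ P := by
      have h := S.min'_mem hSne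
      simp only [hS, Finset.mem_filter] at h
      exact h.2
    have hmin : ∀ h : Fin n, ψ (X h) ∈ P → i ≤ h := fun h hh =>
      S.min'_le h (by simp [hS, hh])
    set dp : Fin n → ℕ := fun j => (B i j).toNat with hdp
    set dm : Fin n → ℕ := fun j => (-B i j).toNat with hdm
    set mp : R := ∏ j : Fin n, X j ^ dp j with hmp
    set mm : R := ∏ j : Fin n, X j ^ dm j with hmmdef
    have hyiA : y i ∈ A := by rw [hA]; exact Algebra.subset_adjoin (Or.inr ⟨i, rfl⟩)
    have hxyi : x i * y i = algebraMap R F (mp + mm) := by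
      rw [hy i, ← mul_assoc, mul_inv_cancel₀ (hxne i), one_mul]
    have hmpmm : mp + mm ∈ Q := by
      rw [hQmem]
      have hmul : (⟨y i, hyiA⟩ : A) * ψ (X i) ∈ P := Ideal.mul_mem_left P _ hiP
      have he : (⟨y i, hyiA⟩ : A) * ψ (X i) = ψ (mp + mm) := by
        apply Subtype.ext
        show y i * ((ψ (X i) : F)) = ((ψ (mp + mm) : F))
        rw [hψ, hψ, ← hx i, mul_comm, hxyi]
      rwa [he] at hmul
    have hbry : br (y i) (x i) = -(algebraMap R F (Dop L i (mp + mm))) := by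
      have h1 : br (x i) (x i * y i) = x i * br (x i) (y i) := by
        rw [hleibniz, hbr_self, zero_mul, zero_add]
      have h2 : br (x i) (x i * y i) = x i * algebraMap R F (Dop L i (mp + mm)) := by
        rw [hxyi, hkey]
      have h3 : br (x i) (y i) = algebraMap R F (Dop L i (mp + mm)) :=
        mul_left_cancel₀ (hxne i) (h1.symm.trans h2)
      rw [hskew, h3]
    have hDQ : Dop L i (mp + mm) ∈ Q := by
      rw [hQmem]
      have hneg : (-(ψ (Dop L i (mp + mm))) : A) ∈ P := by
        refine hpoisson (ψ (X i)) hiP ⟨y i, hyiA⟩ _ ?_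
        show (-(ψ (Dop L i (mp + mm)) : A) : F) = br (y i) ((ψ (X i) : F))
        rw [hψ]
        push_cast
        rw [hψ, ← hx i, hbry]
      exact (neg_mem_iff).mp hneg
    set cp : ℂ := wfun L i (Finsupp.equivFunOnFinite.symm dp) with hcp
    set cm : ℂ := wfun L i (Finsupp.equivFunOnFinite.symm dm) with hcm
    have hDval : Dop L i (mp + mm) = cp • mp + cm • mm := by
      rw [Dop_add, hmp, hmmdef, prod_X_pow_eq, prod_X_pow_eq, Dop_monomial, Dop_monomial]
    have hdiffmem : (cp - cm) • mm ∈ Q := by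
      have h1 : cp • (mp + mm) ∈ Q := hQsmul _ _ hmpmm
      have h2 : cp • (mp + mm) - (cp • mp + cm • mm) = (cp - cm) • mm := by
        rw [smul_add, sub_smul]
        abel
      have h3 := Submodule.sub_mem Q h1 (hDval ▸ hDQ)
      rwa [h2] at h3
    have hccne : cp - cm ≠ 0 := by
      have hzeq : ∀ l, ((dp l : ℤ) - (dm l : ℤ)) = max (B i l) 0 + min (B i l) 0 := by
        intro l
        simp only [hdp, hdm]
        omega
      have hcpcm : cp - cm
          = ((∑ l : Fin n, L i l * (max (B i l) 0 + min (B i l) 0) : ℤ) : ℂ) := by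
        rw [hcp, hcm, wfun_equivFun, wfun_equivFun, ← Finset.sum_sub_distrib, Int.cast_sum]
        refine Finset.sum_congr rfl fun l _ => ?_
        rw [← mul_sub, ← hzeq l]
        push_cast
        ring
      intro h0
      rw [hcpcm] at h0
      have hz : (∑ l : Fin n, L i l * (max (B i l) 0 + min (B i l) 0) : ℤ) = 0 := by
        exact_mod_cast h0
      apply hgen i
      have hq : ((∑ l : Fin n, L i l * (max (B i l) 0 + min (B i l) 0) : ℤ) : ℚ) = 0 := by
        rw [hz]; simp
      rw [Int.cast_sum] at hq
      rw [← hq]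
      refine Finset.sum_congr rfl fun l _ => ?_
      push_cast
      ring
    have hmmQ : mm ∈ Q := by
      have h := hQsmul (cp - cm)⁻¹ _ hdiffmem
      rwa [smul_smul, inv_mul_cancel₀ hccne, one_smul] at h
    have hexj : ∃ j ∈ Finset.univ, (X j : R) ^ dm j ∈ Q := by
      rw [← Ideal.IsPrime.prod_mem_iff]
      exact hmmdef ▸ hmmQ
    obtain ⟨j, _, hjQ⟩ := hexj
    have hdmpos : 0 < dm j := by
      by_contra hzp
      push_neg at hzp
      have h0 : dm j = 0 := by omega
      rw [h0, pow_zero] at hjQ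
      exact hQne hjQ
    have hBij : B i j < 0 := by
      simp only [hdm] at hdmpos
      omega
    have hji : j < i := hBneg i j hBij
    have hXjQ : ψ (X j) ∈ P := (hQmem _).mp (hQprime.mem_of_pow_mem _ hjQ)
    exact absurd (hmin j hXjQ) (not_le.mpr hji)
  -- operators preserve Q
  have hXQ : ∀ j : Fin n, (X j : R) ∉ Q := fun j hj => hnoX j ((hQmem _).mp hj)
  have hDmem : ∀ f ∈ Q, ∀ j : Fin n, Dop L j f ∈ Q := by
    intro f hf j
    rcases hQprime.mem_or_mem (hQD f hf j) with h | h
    · exact absurd h (hXQ j)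
    · exact h
  -- separation of monomials
  have hsep : ∀ (m m' : Fin n →₀ ℕ), m ≠ m' → ∃ j, wfun L j m ≠ wfun L j m' := by
    intro m m' hne
    by_contra hall
    push_neg at hall
    set v : Fin n → ℤ := fun l => (m l : ℤ) - (m' l : ℤ) with hv
    have hLv : L.mulVec v = 0 := by
      funext j
      have h := hall j
      simp only [wfun] at h
      have hc : ((∑ l : Fin n, L j l * v l : ℤ) : ℂ) = 0 := by
        have hsplit : ((∑ l : Fin n, L j l * v l : ℤ) : ℂ)
            = (∑ l : Fin n, (L j l : ℂ) * (m l : ℂ))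
              - ∑ l : Fin n, (L j l : ℂ) * ((m' l : ℂ)) := by
          rw [← Finset.sum_sub_distrib, Int.cast_sum]
          refine Finset.sum_congr rfl fun l _ => ?_
          simp only [hv]
          push_cast
          ring

        rw [hsplit, h, sub_self]
      have hz : (∑ l : Fin n, L j l * v l : ℤ) = 0 := by exact_mod_cast hc
      simpa [Matrix.mulVec, dotProduct] using hz
    have hBLv : (B * L).mulVec v = μ • v := by rw [hBL, Matrix.smul_mulVec, Matrix.one_mulVec]
    rw [← Matrix.mulVec_mulVec, hLv, Matrix.mulVec_zero] at hBLv
    have hvz : ∀ l, v l = 0 := by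
      intro l
      have h := congrFun hBLv l
      simp only [Pi.zero_apply, Pi.smul_apply, smul_eq_mul] at h
      rcases mul_eq_zero.mp h.symm with h' | h'
      · exact absurd h' hμ
      · exact h'
    apply hne
    ext l
    have h := hvz l
    simp only [hv] at h
    omega
  -- descent on the support
  have hdesc : ∀ N : ℕ, ∀ f : R, f ∈ Q → f ≠ 0 → f.support.card ≤ N → False := by
    intro N
    induction N with
    | zero =>
      intro f hfQ hf0 hcard
      have h1 := Finset.card_pos.mpr (MvPolynomial.support_nonempty.mpr hf0)
      omega
    | succ N ih =>
      intro f hfQ hf0 hcard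
      by_cases hone : f.support.card ≤ 1
      · have h1 : f.support.card = 1 :=
          le_antisymm hone (Finset.card_pos.mpr (MvPolynomial.support_nonempty.mpr hf0))
        obtain ⟨m, hm⟩ := Finset.card_eq_one.mp h1
        have hfm : f = monomial m (coeff m f) := by
          conv_lhs => rw [MvPolynomial.as_sum f]
          rw [hm, Finset.sum_singleton]
        have hc : coeff m f ≠ 0 := by
          intro h
          rw [hfm, h, monomial_zero] at hf0
          exact hf0 rfl
        have hmon1 : monomial m (1 : ℂ) ∈ Q := by
          have h := hQsmul (coeff m f)⁻¹ f hfQ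
          nth_rewrite 2 [hfm] at h
          rwa [smul_monomial, smul_eq_mul, inv_mul_cancel₀ hc] at h
        have hprodm : (∏ l ∈ m.support, (X l : R) ^ m l) ∈ Q := by
          rw [prod_X_pow_eq_monomial]
          exact hmon1
        obtain ⟨l, _, hlQ⟩ := (Ideal.IsPrime.prod_mem_iff).mp hprodm
        exact hXQ l (hQprime.mem_of_pow_mem _ hlQ)
      · push_neg at hone
        obtain ⟨m, hmmem, m', hm'mem, hmne⟩ := Finset.one_lt_card.mp hone
        obtain ⟨j, hj⟩ := hsep m m' hmne
        set g : R := Dop L j f - wfun L j m' • f with hgdef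
        have hgQ : g ∈ Q := Submodule.sub_mem Q (hDmem f hfQ j) (hQsmul _ _ hfQ)
        have hcoeffg : ∀ m'' : Fin n →₀ ℕ,
            coeff m'' g = (wfun L j m'' - wfun L j m') * coeff m'' f := by
          intro m''
          rw [hgdef, coeff_sub, coeff_Dop, coeff_smul, smul_eq_mul]
          ring
        have hg0 : g ≠ 0 := by
          intro h
          have hcg := hcoeffg m
          rw [h, coeff_zero] at hcg
          exact (mul_ne_zero (sub_ne_zero_of_ne hj)
            (MvPolynomial.mem_support_iff.mp hmmem)) hcg.symm
        have hsubg : g.support ⊆ f.support.erase m' := by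
          intro m'' hm''
          rw [Finset.mem_erase]
          have h1 : coeff m'' g ≠ 0 := MvPolynomial.mem_support_iff.mp hm''
          rw [hcoeffg] at h1
          constructor
          · intro h
            subst h
            simp at h1
          · exact MvPolynomial.mem_support_iff.mpr (right_ne_zero_of_mul h1)
        refine ih g hgQ hg0 ?_
        have hcc := Finset.card_le_card hsubg
        rw [Finset.card_erase_of_mem hm'mem] at hcc
        omega
  -- conclusion : clear denominators and apply the descent
  by_contra hP
  obtain ⟨a, haP, ha0⟩ := (Submodule.ne_bot_iff P).mp hP
  have hπ : (∏ l : Fin n, x l) = algebraMap R F (∏ l : Fin n, X l) := by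
    rw [map_prod]
    exact Finset.prod_congr rfl fun l _ => hx l
  have hclear : ∀ t : F, t ∈ A →
      ∃ (g : R) (N : ℕ), t * (∏ l : Fin n, x l) ^ N = algebraMap R F g := by
    intro t ht
    rw [hA] at ht
    induction ht using Algebra.adjoin_induction with
    | mem s hs =>
      rcases hs with ⟨i, rfl⟩ | ⟨i, rfl⟩
      · exact ⟨X i, 0, by rw [pow_zero, mul_one, hx]⟩
      · refine ⟨((∏ j : Fin n, X j ^ (B i j).toNat) + ∏ j : Fin n, X j ^ (-B i j).toNat)
          * ∏ l ∈ Finset.univ.erase i, X l, 1, ?_⟩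
        have hsplit : (∏ l : Fin n, x l)
            = x i * algebraMap R F (∏ l ∈ Finset.univ.erase i, X l) := by
          rw [← Finset.mul_prod_erase Finset.univ x (Finset.mem_univ i)]
          congr 1
          rw [map_prod]
          exact Finset.prod_congr rfl fun l _ => hx l
        rw [pow_one, hy i, hsplit, map_mul, mul_comm ((x i)⁻¹), mul_assoc,
          ← mul_assoc ((x i)⁻¹), inv_mul_cancel₀ (hxne i), one_mul]
    | algebraMap c =>
      refine ⟨C c, 0, ?_⟩
      rw [pow_zero, mul_one, ← MvPolynomial.algebraMap_eq, ← IsScalarTower.algebraMap_apply]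
    | add p q hp hq ihp ihq =>
      obtain ⟨g1, N1, h1⟩ := ihp
      obtain ⟨g2, N2, h2⟩ := ihq
      refine ⟨g1 * (∏ l : Fin n, X l) ^ N2 + g2 * (∏ l : Fin n, X l) ^ N1, N1 + N2, ?_⟩
      have e1 : p * (∏ l : Fin n, x l) ^ (N1 + N2)
          = algebraMap R F g1 * (∏ l : Fin n, x l) ^ N2 := by
        rw [pow_add, ← mul_assoc, h1]
      have e2 : q * (∏ l : Fin n, x l) ^ (N1 + N2)
          = algebraMap R F g2 * (∏ l : Fin n, x l) ^ N1 := by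
        rw [pow_add, mul_comm ((∏ l : Fin n, x l) ^ N1), ← mul_assoc, h2]
      rw [add_mul, e1, e2, map_add, map_mul, map_mul, map_pow, map_pow, ← hπ]
    | mul p q hp hq ihp ihq =>
      obtain ⟨g1, N1, h1⟩ := ihp
      obtain ⟨g2, N2, h2⟩ := ihq
      refine ⟨g1 * g2, N1 + N2, ?_⟩
      have e : p * q * (∏ l : Fin n, x l) ^ (N1 + N2)
          = (p * (∏ l : Fin n, x l) ^ N1) * (q * (∏ l : Fin n, x l) ^ N2) := by
        rw [pow_add]; ring
      rw [e, h1, h2, map_mul]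
  obtain ⟨g, N, hg⟩ := hclear (a : F) a.2
  have hπA : (∏ l : Fin n, x l) ^ N ∈ A := by
    refine pow_mem (prod_mem fun l _ => ?_) N
    rw [hx l]
    exact hφA (X l)
  have hbP : a * (⟨(∏ l : Fin n, x l) ^ N, hπA⟩ : A) ∈ P := Ideal.mul_mem_right _ _ haP
  have hbe : ((a * (⟨(∏ l : Fin n, x l) ^ N, hπA⟩ : A) : A) : F) = algebraMap R F g := hg
  have hπne : (∏ l : Fin n, x l) ^ N ≠ 0 :=
    pow_ne_zero _ (Finset.prod_ne_zero_iff.mpr fun l _ => hxne l)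
  have hgne : g ≠ 0 := by
    intro h0
    rw [h0, map_zero] at hbe
    have hcoe : (a : F) = 0 := by
      rcases mul_eq_zero.mp hbe with h' | h'
      · exact h'
      · exact absurd h' hπne
    exact ha0 (Subtype.ext hcoe)
  have hgQ : g ∈ Q := by
    rw [hQmem]
    have he : ψ g = a * (⟨(∏ l : Fin n, x l) ^ N, hπA⟩ : A) := Subtype.ext (by rw [hψ, hbe])
    rw [he]
    exact hbP
  exact hdesc g.support.card g hgQ hgne le_rfl
end
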